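/- arXiv:2406.04559 — 6 statements merged into one kernel-verified Lean document; each statement's English description precedes it below -/
import Mathlib

section
/- Let Δ be a finite set with |Δ| ≥ 2 and let W ≤ Sym(Δ×Δ) be the product-action wreath product Sym(Δ) ↑ Sym(2), i.e., the subgroup generated by all permutations (x,y) ↦ (σx, τy) for σ, τ ∈ Sym(Δ) together with the coordinate swap (x,y) ↦ (y,x). If G ≤ W has exactly 3 orbits on (Δ×Δ)×(Δ×Δ), then the 2-closure of G equals W. -/
/-- The 2-closure of a permutation group `G ≤ Sym(Ω)`. -/
def twoClosure {Ω : Type*} (G : Subgroup (Equiv.Perm Ω)) : Subgroup (Equiv.Perm Ω) where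
  carrier := {σ | ∀ a b : Ω, ∃ g ∈ G, g a = σ a ∧ g b = σ b}
  one_mem' := fun a b => ⟨1, G.one_mem, rfl, rfl⟩
  mul_mem' := by
    intro σ τ hσ hτ a b
    obtain ⟨g, hg, hga, hgb⟩ := hτ a b
    obtain ⟨h, hh, hha, hhb⟩ := hσ (τ a) (τ b)
    refine ⟨h * g, mul_mem hh hg, ?_, ?_⟩ <;>
      simp [Equiv.Perm.mul_apply, hga, hgb, hha, hhb]
  inv_mem' := by
    intro σ hσ a b
    obtain ⟨g, hg, hga, hgb⟩ := hσ (σ⁻¹ a) (σ⁻¹ b)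
    refine ⟨g⁻¹, inv_mem hg, ?_, ?_⟩
    · have := congrArg (⇑g⁻¹) hga
      simpa [Equiv.Perm.inv_def] using this.symm
    · have := congrArg (⇑g⁻¹) hgb
      simpa [Equiv.Perm.inv_def] using this.symm

/-- A rank 3 permutation group: transitive with exactly 3 orbits on Ω × Ω. -/
def IsRank3 {Ω : Type*} (G : Subgroup (Equiv.Perm Ω)) : Prop :=
  MulAction.IsPretransitive G Ω ∧
    Nat.card (MulAction.orbitRel.Quotient G (Ω × Ω)) = 3


/-- The product-action wreath product `Sym(Δ) ↑ Sym(2) ≤ Sym(Δ × Δ)`: the subgroup generated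
by all permutations `(x, y) ↦ (σ x, τ y)` together with the coordinate swap. -/
def productWreath (Δ : Type*) : Subgroup (Equiv.Perm (Δ × Δ)) :=
  Subgroup.closure
    ({π : Equiv.Perm (Δ × Δ) | ∃ σ τ : Equiv.Perm Δ, ∀ x : Δ × Δ, π x = (σ x.1, τ x.2)} ∪
      {(Equiv.prodComm Δ Δ : Equiv.Perm (Δ × Δ))})

/-!
The wreath product `W` preserves the Hamming distance on `Δ × Δ`, which takes exactly the
three values `0, 1, 2`. As `G ≤ W` has only three orbits on pairs, these orbits are precisely
the level sets of the distance, so `W` lies in the 2-closure of `G`. Conversely, the 2-closure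
preserves distance `1`, so it consists of automorphisms of the rook's graph `K_Δ □ K_Δ`.
Cliques of this graph lie in a row or a column, hence such an automorphism maps each row into a
line; since a row and a column meet, either all rows go to rows, and the automorphism is a
product `(x, y) ↦ (σ x, τ y)`, or all rows go to columns, and it is such a product followed by
the coordinate swap.
-/

/-- Equal or adjacent in the rook's graph `K_Δ □ K_Δ`. -/
def SameLine {Δ : Type*} (a b : Δ × Δ) : Prop :=
  a.1 = b.1 ∨ a.2 = b.2

def prodHammingDist {Δ : Type*} [DecidableEq Δ] (a b : Δ × Δ) : ℕ :=
  (if a.1 = b.1 then 0 else 1) + (if a.2 = b.2 then 0 else 1)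

theorem apply_apply_eq_of_mem_twoClosure {Ω β : Type*} {G : Subgroup (Equiv.Perm Ω)}
    {F : Ω → Ω → β} (hF : ∀ g ∈ G, ∀ a b, F (g a) (g b) = F a b) {σ : Equiv.Perm Ω}
    (hσ : σ ∈ twoClosure G) (a b : Ω) : F (σ a) (σ b) = F a b := by
  obtain ⟨g, hg, ha, hb⟩ := hσ a b
  rw [← ha, ← hb, hF g hg]

theorem MulAction.exists_smul_eq_of_invariant {G X Y : Type*} [Group G] [MulAction G X]
    [Finite (orbitRel.Quotient G X)] (f : X → Y) (hf : ∀ (g : G) x, f (g • x) = f x)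
    (hcard : Nat.card (orbitRel.Quotient G X) ≤ Nat.card (Set.range f)) {x y : X}
    (hxy : f x = f y) : ∃ g : G, g • x = y := by
  let φ : orbitRel.Quotient G X → Set.range f :=
    Quotient.lift (fun x => ⟨f x, x, rfl⟩) (by
      rintro a b ⟨g, rfl⟩
      exact Subtype.ext (hf g b))
  have hφ : Function.Surjective φ := by
    rintro ⟨_, x, rfl⟩
    exact ⟨⟦x⟧, rfl⟩
  have hyx : (⟦y⟧ : orbitRel.Quotient G X) = ⟦x⟧ :=
    (hφ.bijective_of_nat_card_le hcard).1 (Subtype.ext hxy.symm)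
  exact mem_orbit_iff.1 (orbitRel_apply.1 (Quotient.exact hyx))

section HammingDist

variable {Δ : Type*} [DecidableEq Δ]

theorem prodHammingDist_le_one_iff {a b : Δ × Δ} :
    prodHammingDist a b ≤ 1 ↔ SameLine a b := by
  unfold prodHammingDist SameLine
  split_ifs <;> simp_all

theorem range_prodHammingDist [Nontrivial Δ] :
    Set.range (fun p : (Δ × Δ) × (Δ × Δ) => prodHammingDist p.1 p.2) = {0, 1, 2} := by
  obtain ⟨u, v, huv⟩ := exists_pair_ne Δ
  ext n
  constructor
  · rintro ⟨p, rfl⟩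
    dsimp only [prodHammingDist]
    split_ifs <;> simp
  · rintro (rfl | rfl | rfl)
    · exact ⟨((u, u), (u, u)), by simp [prodHammingDist]⟩
    · exact ⟨((u, u), (u, v)), by simp [prodHammingDist, huv]⟩
    · exact ⟨((u, u), (v, v)), by simp [prodHammingDist, huv]⟩

theorem nat_card_range_prodHammingDist [Nontrivial Δ] :
    Nat.card (Set.range fun p : (Δ × Δ) × (Δ × Δ) => prodHammingDist p.1 p.2) = 3 := by
  rw [range_prodHammingDist]
  simp

theorem prodHammingDist_apply_of_mem_productWreath {w : Equiv.Perm (Δ × Δ)}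
    (hw : w ∈ productWreath Δ) (a b : Δ × Δ) :
    prodHammingDist (w a) (w b) = prodHammingDist a b := by
  induction hw using Subgroup.closure_induction generalizing a b with
  | mem π hπ =>
    rcases hπ with ⟨σ, τ, hπ⟩ | rfl
    · simp [prodHammingDist, hπ]
    · exact add_comm _ _
  | one => rfl
  | mul v u _ _ hv hu => simp only [Equiv.Perm.mul_apply, hv, hu]
  | inv v _ hv => simpa using (hv (v⁻¹ a) (v⁻¹ b)).symm

end HammingDist

section RookGraph

variable {Δ : Type*}

theorem fst_const_or_snd_const_of_sameLine {ι : Type*} {f : ι → Δ × Δ}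
    (hf : ∀ i j, SameLine (f i) (f j)) :
    (∀ i j, (f i).1 = (f j).1) ∨ (∀ i j, (f i).2 = (f j).2) := by
  by_contra! ⟨⟨i, j, hij⟩, ⟨k, l, hkl⟩⟩
  have hij₂ : (f i).2 = (f j).2 := (hf i j).resolve_left hij
  -- a point of the clique off the column through `f i` and `f j` would lie in both their rows
  have hoff : ∀ m, (f m).2 ≠ (f i).2 → False := fun m hm =>
    hij (((hf m i).resolve_right hm).symm.trans ((hf m j).resolve_right (hij₂ ▸ hm)))
  by_cases hk : (f k).2 = (f i).2
  · exact hoff l fun hl => hkl (hk.trans hl.symm)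
  · exact hoff k hk

theorem exists_apply_eq_of_fst_const [Finite Δ] {f : Δ → Δ × Δ} (hf : Function.Injective f)
    (hfst : ∀ y y', (f y).1 = (f y').1) (x : Δ) (b : Δ × Δ) (hb : b.1 = (f x).1) :
    ∃ y, f y = b := by
  have hsnd : Function.Injective fun y => (f y).2 := fun y y' h => hf (Prod.ext (hfst y y') h)
  obtain ⟨y, hy⟩ := Finite.surjective_of_injective hsnd b.2
  exact ⟨y, Prod.ext ((hfst y x).trans hb.symm) hy⟩

theorem exists_apply_eq_of_snd_const [Finite Δ] {f : Δ → Δ × Δ} (hf : Function.Injective f)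
    (hsnd : ∀ y y', (f y).2 = (f y').2) (x : Δ) (b : Δ × Δ) (hb : b.2 = (f x).2) :
    ∃ y, f y = b := by
  obtain ⟨y, hy⟩ := exists_apply_eq_of_fst_const (Prod.swap_injective.comp hf) hsnd x b.swap hb
  exact ⟨y, Prod.swap_injective hy⟩

variable (σ : Equiv.Perm (Δ × Δ))

theorem eq_of_row_fst_const_of_row_snd_const [Finite Δ] {x x' : Δ}
    (hx : ∀ y y', (σ (x, y)).1 = (σ (x, y')).1)
    (hx' : ∀ y y', (σ (x', y)).2 = (σ (x', y')).2) :
    x = x' := by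
  let b : Δ × Δ := ((σ (x, x)).1, (σ (x', x')).2)
  obtain ⟨y, hy⟩ := exists_apply_eq_of_fst_const
    (σ.injective.comp (Prod.mk_right_injective x)) hx x b rfl
  obtain ⟨y', hy'⟩ := exists_apply_eq_of_snd_const
    (σ.injective.comp (Prod.mk_right_injective x')) hx' x' b rfl
  exact congrArg Prod.fst (σ.injective (hy.trans hy'.symm))

theorem rows_fst_const_or_rows_snd_const [Finite Δ]
    (hσ : ∀ a b, SameLine a b → SameLine (σ a) (σ b)) :
    (∀ x y y', (σ (x, y)).1 = (σ (x, y')).1) ∨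
      (∀ x y y', (σ (x, y)).2 = (σ (x, y')).2) := by
  by_contra! ⟨⟨x, y, y', hx⟩, ⟨x', z, z', hx'⟩⟩
  have hrow : ∀ x, (∀ y y', (σ (x, y)).1 = (σ (x, y')).1) ∨
      (∀ y y', (σ (x, y)).2 = (σ (x, y')).2) :=
    fun x => fst_const_or_snd_const_of_sameLine fun y y' => hσ _ _ (Or.inl rfl)
  have hx'₁ := (hrow x').resolve_right fun h => hx' (h z z')
  have hx₂ := (hrow x).resolve_left fun h => hx (h y y')
  obtain rfl := eq_of_row_fst_const_of_row_snd_const σ hx'₁ hx₂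
  exact hx (hx'₁ y y')

theorem mem_productWreath_of_rows_fst_const [Finite Δ]
    (hσ : ∀ a b, SameLine a b → SameLine (σ a) (σ b))
    (hrow : ∀ x y y', (σ (x, y)).1 = (σ (x, y')).1) : σ ∈ productWreath Δ := by
  let f x := (σ (x, x)).1
  let g y := (σ (y, y)).2
  have hf : Function.Injective f := fun x x' h => by
    obtain ⟨y, hy⟩ := exists_apply_eq_of_fst_const
      (σ.injective.comp (Prod.mk_right_injective x)) (hrow x) x (σ (x', x')) h.symm
    exact congrArg Prod.fst (σ.injective hy)
  have hσfg : ∀ x y, σ (x, y) = (f x, g y) := fun x y => by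
    refine Prod.ext (hrow x y x) ?_
    rcases hσ (x, y) (y, y) (Or.inr rfl) with h | h
    · rw [hf ((hrow x x y).trans h)]
    · exact h
  have hg : Function.Injective g := fun y y' h =>
    congrArg Prod.snd (σ.injective ((hσfg y y).trans (h ▸ hσfg y y').symm))
  exact Subgroup.subset_closure <| Or.inl
    ⟨Equiv.ofBijective f (Finite.injective_iff_bijective.1 hf),
      Equiv.ofBijective g (Finite.injective_iff_bijective.1 hg), fun p => hσfg p.1 p.2⟩

theorem mem_productWreath_of_sameLine [Finite Δ]
    (hσ : ∀ a b, SameLine a b → SameLine (σ a) (σ b)) : σ ∈ productWreath Δ := by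
  let s : Equiv.Perm (Δ × Δ) := Equiv.prodComm Δ Δ
  rcases rows_fst_const_or_rows_snd_const σ hσ with hrow | hcol
  · exact mem_productWreath_of_rows_fst_const σ hσ hrow
  · have hsσ : s * σ ∈ productWreath Δ :=
      mem_productWreath_of_rows_fst_const _ (fun a b h => (hσ a b h).symm) hcol
    have hs : s ∈ productWreath Δ := Subgroup.subset_closure (Or.inr rfl)
    have hss : s * s = 1 := Equiv.ext fun _ => rfl
    simpa [← mul_assoc, hss] using mul_mem hs hsσ

end RookGraph

/-- If `|Δ| ≥ 2` and `G ≤ Sym(Δ) ↑ Sym(2)` has exactly 3 orbits on pairs,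
then the 2-closure of `G` is the full wreath product `Sym(Δ) ↑ Sym(2)`. -/
theorem rank3_productAction_twoClosure {Δ : Type*} [Fintype Δ]
    (hΔ : 2 ≤ Fintype.card Δ)
    (G : Subgroup (Equiv.Perm (Δ × Δ))) (hGW : G ≤ productWreath Δ)
    (hrank : Nat.card (MulAction.orbitRel.Quotient G ((Δ × Δ) × (Δ × Δ))) = 3) :
    twoClosure G = productWreath Δ := by
  classical
  have : Nontrivial Δ := Fintype.one_lt_card_iff_nontrivial.1 hΔ
  have hG : ∀ g ∈ G, ∀ a b, prodHammingDist (g a) (g b) = prodHammingDist a b :=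
    fun g hg => prodHammingDist_apply_of_mem_productWreath (hGW hg)
  apply le_antisymm
  · refine fun σ hσ => mem_productWreath_of_sameLine σ fun a b hab => ?_
    rw [← prodHammingDist_le_one_iff, apply_apply_eq_of_mem_twoClosure hG hσ]
    exact prodHammingDist_le_one_iff.2 hab
  · intro w hw a b
    have : Finite (MulAction.orbitRel.Quotient G ((Δ × Δ) × (Δ × Δ))) :=
      Nat.finite_of_card_ne_zero (hrank.trans_ne three_ne_zero)
    obtain ⟨g, hg⟩ := MulAction.exists_smul_eq_of_invariant (x := (a, b)) (y := (w a, w b))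
      (fun p : (Δ × Δ) × (Δ × Δ) => prodHammingDist p.1 p.2) (fun g p => hG g.1 g.2 p.1 p.2)
      (hrank.trans nat_card_range_prodHammingDist.symm).le
      (prodHammingDist_apply_of_mem_productWreath hw a b).symm
    exact ⟨g, g.2, congrArg Prod.fst hg, congrArg Prod.snd hg⟩
end

section
/- Let p and e be primes such that the multiplicative order of p modulo e equals e−1, let k be a positive integer, d = k(e−1), q = p^d, F = GF(q), and let ω be a generator of the cyclic group F*. Let C = ⟨ω^e⟩ be the subgroup of e-th powers in F*. Let G₀ ≤ Sym(F) be the subgroup generated by the map x ↦ ω^e·x and the Frobenius map x ↦ x^p. Then |G₀| = k(e−1)(q−1)/e, and G₀ has exactly two orbits on F ∖ {0}, namely C (of size (q−1)/e) and (F ∖ {0}) ∖ C (of size (e−1)(q−1)/e). -/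
/-- The Frobenius map `x ↦ x^p` as a permutation of a finite field of characteristic `p`. -/
noncomputable def frobPerm (F : Type*) [Field F] [Finite F] (p : ℕ) [Fact p.Prime]
    [CharP F p] : Equiv.Perm F :=
  Equiv.ofBijective (fun x => x ^ p)
    (Finite.injective_iff_bijective.mp (fun a b h => frobenius_inj F p (by simpa [frobenius_def] using h)))

/-- Multiplication by a fixed unit as a permutation of a field. -/
noncomputable def mulPerm {F : Type*} [Field F] (u : Fˣ) : Equiv.Perm F :=
  Equiv.mulLeft₀ (u : F) (Units.ne_zero u)

/-!
Frobenius `φ` normalizes multiplication by `C = ⟨ω^e⟩`: `φ ∘ (c ·) = (c^p ·) ∘ φ`. Hence every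
element of `G₀` is `x ↦ c · x^(p^j)` with `c ∈ C` and `0 ≤ j < d`, uniquely (evaluate at `1`), so
`|G₀| = |C| · d`. Writing a nonzero `x` as `ω^s`, its orbit consists of the `ω^t` with
`t ≡ s p^j (mod e)` for some `j`. Since `p` generates `(ℤ/e)ˣ`, there are exactly two orbits on
`F*`: the exponents divisible by `e`, which is `C`, and all the others.
-/

open Subgroup MulAction

lemma zpow_mem_zpowers_pow_iff {G : Type*} [Group G] {g : G} {e : ℕ} (he : e ∣ orderOf g)
    {s : ℤ} : g ^ s ∈ zpowers (g ^ e) ↔ (e : ℤ) ∣ s := by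
  constructor
  · intro h
    obtain ⟨m, hm⟩ := mem_zpowers_iff.mp h
    rw [← zpow_natCast, ← zpow_mul, zpow_eq_zpow_iff_modEq] at hm
    have : (e : ℤ) ∣ s - e * m := (Int.natCast_dvd_natCast.mpr he).trans hm.dvd
    simpa using dvd_add this (dvd_mul_right (e : ℤ) m)
  · rintro ⟨m, rfl⟩
    exact mem_zpowers_iff.mpr ⟨m, by rw [← zpow_natCast, ← zpow_mul]⟩

lemma exists_pow_eq_of_orderOf_eq_card_sub_one {K : Type*} [Field K] [Fintype K] {g a : K}
    (hg : orderOf g = Fintype.card K - 1) (ha : a ≠ 0) : ∃ j : ℕ, g ^ j = a := by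
  have hg₀ : g ≠ 0 :=
    (orderOf_pos_iff.mp (hg ▸ Nat.sub_pos_of_lt Fintype.one_lt_card)).isUnit.ne_zero
  have htop : zpowers (Units.mk0 g hg₀) = ⊤ := by
    refine eq_top_of_card_eq _ ?_
    rw [Nat.card_zpowers, ← orderOf_units, Units.val_mk0, hg, Nat.card_units,
      Nat.card_eq_fintype_card]
  obtain ⟨j, hj⟩ := mem_powers_iff_mem_zpowers.mpr (htop ▸ mem_top (Units.mk0 a ha))
  exact ⟨j, by simpa using congr_arg Units.val hj⟩

lemma dvd_pow_sub_one_of_orderOf_dvd {e p d : ℕ} (h : orderOf (p : ZMod e) ∣ d) :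
    e ∣ p ^ d - 1 := by
  have hpd : ((p ^ d : ℕ) : ZMod e) = 1 := by
    push_cast
    exact orderOf_dvd_iff_pow_eq_one.mp h
  rcases (p ^ d).eq_zero_or_pos with h₀ | hpos
  · simp [h₀]
  · rw [← ZMod.natCast_eq_zero_iff, Nat.cast_sub hpos, hpd, Nat.cast_one, sub_self]

lemma ncard_setOf_mem_zpowers {M : Type*} [Monoid M] (u : Mˣ) :
    {x : M | ∃ c : Mˣ, c ∈ zpowers u ∧ x = c}.ncard = orderOf u := by
  have : {x : M | ∃ c : Mˣ, c ∈ zpowers u ∧ x = c} = Units.val '' (zpowers u : Set Mˣ) := by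
    ext x
    simp [eq_comm]
  rw [this, Set.ncard_image_of_injective _ Units.val_injective, ← Nat.card_coe_set_eq,
    SetLike.coe_sort_coe, Nat.card_zpowers]

section Frobenius

variable {F : Type*} [Field F]

@[simp]
lemma mulPerm_apply (u : Fˣ) (x : F) : mulPerm u x = u * x := rfl

lemma mulPerm_eq_toPermHom (u : Fˣ) : mulPerm u = toPermHom Fˣ F u := Equiv.ext fun _ => rfl

@[simp]
lemma mulPerm_one : mulPerm (1 : Fˣ) = 1 := by rw [mulPerm_eq_toPermHom, map_one]

lemma mulPerm_mul (u v : Fˣ) : mulPerm (u * v) = mulPerm u * mulPerm v := by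
  simp only [mulPerm_eq_toPermHom, map_mul]

lemma mulPerm_zpow (u : Fˣ) (m : ℤ) : mulPerm (u ^ m) = mulPerm u ^ m := by
  simp only [mulPerm_eq_toPermHom, map_zpow]

variable [Finite F] {p : ℕ} [Fact p.Prime] [CharP F p]

@[simp]
lemma frobPerm_pow_apply (j : ℕ) (x : F) : (frobPerm F p ^ j) x = x ^ p ^ j := by
  induction j generalizing x with
  | zero => simp
  | succ j ih => rw [pow_succ, Equiv.Perm.mul_apply, ih, pow_succ', pow_mul]; rfl

lemma frobPerm_pow_mul_mulPerm (j : ℕ) (u : Fˣ) :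
    frobPerm F p ^ j * mulPerm u = mulPerm (u ^ p ^ j) * frobPerm F p ^ j := by
  ext x
  simp [mul_pow]

lemma orderOf_frobPerm {d : ℕ} (hF : Nat.card F = p ^ d) : orderOf (frobPerm F p) = d := by
  have := Fintype.ofFinite F
  let := ZMod.algebra F p
  have hfrob : orderOf (frobPerm F p) = orderOf (FiniteField.frobeniusAlgHom (ZMod p) F) :=
    orderOf_eq_orderOf_iff.mpr fun n => by
      simp [Equiv.ext_iff, AlgHom.ext_iff, FiniteField.coe_frobeniusAlgHom, pow_iterate]
  have hpow : p ^ Module.finrank (ZMod p) F = p ^ d := by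
    rw [← hF, ← Fintype.card_eq_nat_card, Module.card_eq_pow_finrank (K := ZMod p), ZMod.card]
  rw [hfrob, FiniteField.orderOf_frobeniusAlgHom]
  exact Nat.pow_right_injective (Fact.out : p.Prime).two_le hpow

lemma mem_closure_mulPerm_frobPerm_iff {u : Fˣ} {g : Equiv.Perm F} :
    g ∈ closure {mulPerm u, frobPerm F p} ↔
      ∃ c ∈ zpowers u, ∃ j : ℕ, mulPerm c * frobPerm F p ^ j = g := by
  constructor
  · intro hg
    induction hg using closure_induction with
    | mem g hg =>
      rcases hg with rfl | rfl
      · exact ⟨u, mem_zpowers u, 0, by simp⟩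
      · exact ⟨1, one_mem _, 1, by simp⟩
    | one => exact ⟨1, one_mem _, 0, by simp⟩
    | mul _ _ _ _ ihg ihh =>
      obtain ⟨c, hc, j, rfl⟩ := ihg
      obtain ⟨c', hc', j', rfl⟩ := ihh
      refine ⟨c * c' ^ p ^ j, mul_mem hc (pow_mem hc' _), j + j', ?_⟩
      rw [mul_assoc, ← mul_assoc (frobPerm F p ^ j), frobPerm_pow_mul_mulPerm, mulPerm_mul,
        pow_add, mul_assoc, mul_assoc]
    | inv _ _ ih =>
      obtain ⟨c, hc, j, rfl⟩ := ih
      obtain ⟨m, hm⟩ : ∃ m, m + j = orderOf (frobPerm F p) * j :=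
        ⟨_, Nat.sub_add_cancel (Nat.le_mul_of_pos_left j (orderOf_pos _))⟩
      refine ⟨(c ^ p ^ m)⁻¹, inv_mem (pow_mem hc _), m, ?_⟩
      rw [eq_inv_iff_mul_eq_one, mul_assoc, ← mul_assoc (frobPerm F p ^ m),
        frobPerm_pow_mul_mulPerm, mul_assoc, ← pow_add, hm, pow_mul (frobPerm F p),
        pow_orderOf_eq_one, one_pow, mul_one, ← mulPerm_mul, inv_mul_cancel, mulPerm_one]
  · rintro ⟨c, hc, j, rfl⟩
    obtain ⟨m, rfl⟩ := mem_zpowers_iff.mp hc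
    rw [mulPerm_zpow]
    exact mul_mem (zpow_mem (subset_closure (by simp)) m) (pow_mem (subset_closure (by simp)) j)

lemma card_closure_mulPerm_frobPerm (u : Fˣ) :
    Nat.card (closure {mulPerm u, frobPerm F p}) = orderOf u * orderOf (frobPerm F p) := by
  let φ : zpowers u × Fin (orderOf (frobPerm F p)) → Equiv.Perm F :=
    fun cj => mulPerm cj.1 * frobPerm F p ^ (cj.2 : ℕ)
  have hφ : φ.Injective := by
    rintro ⟨c, j⟩ ⟨c', j'⟩ h
    obtain rfl : c = c' := Subtype.ext <| Units.ext <| by simpa [φ] using DFunLike.congr_fun h 1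
    have := pow_injOn_Iio_orderOf j.2 j'.2 (mul_left_cancel h)
    simp [Fin.ext this]
  have hrange : Set.range φ = closure {mulPerm u, frobPerm F p} := by
    ext g
    rw [SetLike.mem_coe, mem_closure_mulPerm_frobPerm_iff]
    constructor
    · rintro ⟨⟨c, j⟩, rfl⟩
      exact ⟨c, c.2, j, rfl⟩
    · rintro ⟨c, hc, j, rfl⟩
      refine ⟨(⟨c, hc⟩, ⟨j % _, Nat.mod_lt _ (orderOf_pos _)⟩), ?_⟩
      simp [φ, pow_mod_orderOf]
  rw [← SetLike.coe_sort_coe, ← hrange, Nat.card_range_of_injective hφ, Nat.card_prod,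
    Nat.card_zpowers, Nat.card_fin]

lemma mem_orbit_closure_mulPerm_frobPerm_iff {u : Fˣ} {x y : F} :
    y ∈ orbit (closure {mulPerm u, frobPerm F p}) x ↔
      ∃ c ∈ zpowers u, ∃ j : ℕ, c * x ^ p ^ j = y := by
  simp only [mem_orbit_iff, Subtype.exists, Subgroup.mk_smul, Equiv.Perm.smul_def,
    mem_closure_mulPerm_frobPerm_iff]
  constructor
  · rintro ⟨_, ⟨c, hc, j, rfl⟩, rfl⟩
    exact ⟨c, hc, j, by simp⟩
  · rintro ⟨c, hc, j, rfl⟩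
    exact ⟨_, ⟨c, hc, j, rfl⟩, by simp⟩

lemma orbit_closure_mulPerm_frobPerm_self (u : Fˣ) :
    orbit (closure {mulPerm u, frobPerm F p}) (u : F) =
      {x : F | ∃ c : Fˣ, c ∈ zpowers u ∧ x = c} := by
  ext y
  rw [mem_orbit_closure_mulPerm_frobPerm_iff]
  constructor
  · rintro ⟨c, hc, j, rfl⟩
    exact ⟨c * u ^ p ^ j, mul_mem hc (pow_mem (mem_zpowers u) _), by push_cast; rfl⟩
  · rintro ⟨c, hc, rfl⟩
    exact ⟨c * u⁻¹, mul_mem hc (inv_mem (mem_zpowers u)), 0, by simp⟩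

lemma orbit_closure_mulPerm_pow_frobPerm_of_generator {ω : Fˣ} (hω : ∀ x, x ∈ zpowers ω)
    {e : ℕ} [Fact e.Prime] (hord : orderOf (p : ZMod e) = e - 1) (he : e ∣ orderOf ω) :
    orbit (closure {mulPerm (ω ^ e), frobPerm F p}) (ω : F) =
      {x : F | x ≠ 0} \ {x : F | ∃ c : Fˣ, c ∈ zpowers (ω ^ e) ∧ x = c} := by
  have hord' : orderOf (p : ZMod e) = Fintype.card (ZMod e) - 1 := by rw [hord, ZMod.card]
  ext y
  rw [mem_orbit_closure_mulPerm_frobPerm_iff]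
  constructor
  · rintro ⟨c, hc, j, rfl⟩
    refine ⟨mul_ne_zero c.ne_zero (pow_ne_zero _ ω.ne_zero), ?_⟩
    rintro ⟨c', hc', hcc'⟩
    have hmem : ω ^ ((p ^ j : ℕ) : ℤ) ∈ zpowers (ω ^ e) := by
      rw [zpow_natCast, show ω ^ p ^ j = c⁻¹ * c' by
        rw [eq_inv_mul_iff_mul_eq]; exact Units.ext (by push_cast; exact hcc')]
      exact mul_mem (inv_mem hc) hc'
    rw [zpow_mem_zpowers_pow_iff he, Int.natCast_dvd_natCast, ← ZMod.natCast_eq_zero_iff] at hmem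
    have hp₀ : (p : ZMod e) ≠ 0 := ne_of_apply_ne orderOf <| by
      rw [hord, orderOf_zero]
      exact Nat.sub_ne_zero_of_lt (Fact.out : e.Prime).one_lt
    push_cast at hmem
    exact pow_ne_zero j hp₀ hmem
  · rintro ⟨hy, hyC⟩
    obtain ⟨s, hs⟩ := mem_zpowers_iff.mp (hω (Units.mk0 y hy))
    have hs₀ : (s : ZMod e) ≠ 0 := by
      rw [Ne, ZMod.intCast_zmod_eq_zero_iff_dvd, ← zpow_mem_zpowers_pow_iff he, hs]
      exact fun h => hyC ⟨_, h, rfl⟩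
    obtain ⟨j, hj⟩ := exists_pow_eq_of_orderOf_eq_card_sub_one hord' hs₀
    refine ⟨ω ^ (s - (p ^ j : ℕ)), (zpow_mem_zpowers_pow_iff he).mpr ?_, j, ?_⟩
    · rw [← ZMod.intCast_zmod_eq_zero_iff_dvd]
      push_cast
      rw [hj, sub_self]
    · rw [← Units.val_pow_eq_pow_val, ← Units.val_mul, ← zpow_natCast, ← zpow_add,
        sub_add_cancel, hs, Units.val_mk0]

end Frobenius

theorem vanLintSchrijver_group_orbits_general
    (p e k d q : ℕ) [Fact p.Prime] (he : e.Prime)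
    (hord : orderOf (p : ZMod e) = e - 1)
    (hd : d = k * (e - 1)) (hq : q = p ^ d)
    (F : Type*) [Field F] [Fintype F] [CharP F p] (hF : Fintype.card F = q)
    (ω : Fˣ) (hω : ∀ x : Fˣ, x ∈ Subgroup.zpowers ω)
    (G₀ : Subgroup (Equiv.Perm F))
    (hG₀ : G₀ = Subgroup.closure {mulPerm (ω ^ e), frobPerm F p})
    (C : Set F) (hC : C = {x : F | ∃ c : Fˣ, c ∈ Subgroup.zpowers (ω ^ e) ∧ x = (c : F)}) :
    Nat.card G₀ = k * (e - 1) * (q - 1) / e ∧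
    MulAction.orbit G₀ ((ω : F) ^ e) = C ∧
    MulAction.orbit G₀ (ω : F) = {x : F | x ≠ 0} \ C ∧
    (∀ x : F, x ≠ 0 → MulAction.orbit G₀ x = C ∨ MulAction.orbit G₀ x = {x : F | x ≠ 0} \ C) ∧
    C.ncard = (q - 1) / e ∧
    ({x : F | x ≠ 0} \ C).ncard = (e - 1) * (q - 1) / e := by
  subst hG₀
  have : Fact e.Prime := ⟨he⟩
  have hcardF : Nat.card F = p ^ d := by rw [Nat.card_eq_fintype_card, hF, hq]
  have hωord : orderOf ω = q - 1 := by
    rw [orderOf_eq_card_of_forall_mem_zpowers hω, Nat.card_units, hcardF, hq]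
  obtain ⟨n, hn⟩ : e ∣ q - 1 :=
    hq ▸ dvd_pow_sub_one_of_orderOf_dvd (hord ▸ hd ▸ dvd_mul_left _ _)
  have heω : e ∣ orderOf ω := hωord ▸ ⟨n, hn⟩
  have hωe : orderOf (ω ^ e) = n := by
    rw [orderOf_pow_of_dvd he.ne_zero heω, hωord, hn, Nat.mul_div_cancel_left _ he.pos]
  have hCcard : C.ncard = n := hC ▸ hωe ▸ ncard_setOf_mem_zpowers (ω ^ e)
  have horb₁ : orbit _ ((ω : F) ^ e) = C :=
    hC ▸ Units.val_pow_eq_pow_val ω e ▸ orbit_closure_mulPerm_frobPerm_self (ω ^ e)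
  have horb₂ : orbit _ (ω : F) = {x : F | x ≠ 0} \ C :=
    hC ▸ orbit_closure_mulPerm_pow_frobPerm_of_generator hω hord heω
  have hC₀ : C ⊆ {x : F | x ≠ 0} := hC ▸ fun _ ⟨c, _, hc⟩ => hc ▸ c.ne_zero
  refine ⟨?_, horb₁, horb₂, fun x hx => ?_, ?_, ?_⟩
  · rw [card_closure_mulPerm_frobPerm, hωe, orderOf_frobPerm hcardF, hn, hd,
      mul_left_comm _ e, Nat.mul_div_cancel_left _ he.pos]
    ring
  · by_cases hxC : x ∈ C
    · exact .inl (orbit_eq_iff.mpr (horb₁ ▸ hxC) |>.trans horb₁)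
    · exact .inr (orbit_eq_iff.mpr (horb₂ ▸ ⟨hx, hxC⟩) |>.trans horb₂)
  · rw [hCcard, hn, Nat.mul_div_cancel_left _ he.pos]
  · rw [Set.ncard_sdiff hC₀, ← Set.compl_singleton_eq, Set.ncard_compl, Set.ncard_singleton,
      hCcard, hcardF, ← hq, hn, mul_left_comm, Nat.mul_div_cancel_left _ he.pos, Nat.sub_one_mul]

/-- Van Lint–Schrijver situation. Let `p, e` be primes with
`ord_e(p) = e - 1`, `q = p^(k(e-1))`, `F = GF(q)`, `ω` a generator of `Fˣ`, and
`C = ⟨ω^e⟩ ≤ Fˣ`. The group `G₀ ≤ Sym(F)` generated by `x ↦ ω^e · x` and the Frobenius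
`x ↦ x^p` has order `k(e-1)(q-1)/e` and exactly two orbits on `F \ {0}`, namely `C`
(of size `(q-1)/e`) and its complement (of size `(e-1)(q-1)/e`). -/
theorem vanLintSchrijver_group_orbits
    (p e k d q : ℕ) [Fact p.Prime] (he : e.Prime)
    (hord : orderOf (p : ZMod e) = e - 1)
    (hk : 0 < k) (hd : d = k * (e - 1)) (hq : q = p ^ d)
    (F : Type*) [Field F] [Fintype F] [CharP F p] (hF : Fintype.card F = q)
    (ω : Fˣ) (hω : ∀ x : Fˣ, x ∈ Subgroup.zpowers ω)
    (G₀ : Subgroup (Equiv.Perm F))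
    (hG₀ : G₀ = Subgroup.closure {mulPerm (ω ^ e), frobPerm F p})
    (C : Set F) (hC : C = {x : F | ∃ c : Fˣ, c ∈ Subgroup.zpowers (ω ^ e) ∧ x = (c : F)}) :
    Nat.card G₀ = k * (e - 1) * (q - 1) / e ∧
    MulAction.orbit G₀ ((ω : F) ^ e) = C ∧
    MulAction.orbit G₀ (ω : F) = {x : F | x ≠ 0} \ C ∧
    (∀ x : F, x ≠ 0 → MulAction.orbit G₀ x = C ∨ MulAction.orbit G₀ x = {x : F | x ≠ 0} \ C) ∧
    C.ncard = (q - 1) / e ∧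
    ({x : F | x ≠ 0} \ C).ncard = (e - 1) * (q - 1) / e :=
  vanLintSchrijver_group_orbits_general p e k d q he hord hd hq F hF ω hω G₀ hG₀ C hC
end

section
/- Let p ≡ 3 (mod 4) be a prime and k an even positive integer, q = p^k, F = GF(q), ω a generator of F*, and C = ⟨ω⁴⟩ the subgroup of fourth powers in F*. Let G₀ ≤ Sym(F) be the subgroup generated by the map x ↦ ω⁴·x and the map x ↦ ω·x^p. Then |G₀| = k(q−1)/4, and G₀ has exactly two orbits on F ∖ {0}, both of size (q−1)/2, namely C ∪ ωC and ω²C ∪ ω³C. -/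
/-- The coset `ω^j · ⟨ω^4⟩` of the group of fourth powers, as a subset of the field `F`. -/
def quarticCoset {F : Type*} [Field F] (ω : Fˣ) (j : ℕ) : Set F :=
  {x : F | ∃ c : Fˣ, c ∈ Subgroup.zpowers (ω ^ 4) ∧ x = (ω : F) ^ j * (c : F)}

lemma peisert_pow_mod4 {p : ℕ} (hp : p % 4 = 3) (i : ℕ) :
    p ^ i % 4 = if Even i then 1 else 3 := by
  induction i with
  | zero => simp
  | succ n ih =>
    rw [pow_succ, Nat.mul_mod, ih]
    by_cases h : Even n <;> simp [h, hp, Nat.even_add_one]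

lemma peisert_geom_mod4 {p : ℕ} (hp : p % 4 = 3) (i : ℕ) :
    (∑ t ∈ Finset.range i, p ^ t) % 4 = if Even i then 0 else 1 := by
  induction i with
  | zero => simp
  | succ n ih =>
    rw [Finset.sum_range_succ, Nat.add_mod, ih, peisert_pow_mod4 hp]
    by_cases h : Even n <;> simp [h, Nat.even_add_one]

lemma peisert_frob_pow_inj (F : Type*) [Field F] [Fintype F] (p : ℕ) [Fact p.Prime]
    [CharP F p] (k : ℕ) (hcard : Fintype.card F = p ^ k) {i j : ℕ} (hi : i < k) (hj : j < k)
    (h : ∀ x : F, x ^ p ^ i = x ^ p ^ j) : i = j := by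
  classical
  have hp1 : 1 < p := (Fact.out : p.Prime).one_lt
  have key : ∀ i j : ℕ, i < k → j < k → (∀ x : F, x ^ p ^ i = x ^ p ^ j) → i ≤ j → i = j := by
    intro i j hi hj h hij
    set d := j - i with hd
    rcases Nat.eq_zero_or_pos d with hd0 | hd0
    · omega
    · exfalso
      have hfix : ∀ x : F, x ^ p ^ d = x := by
        intro x
        have hinj : Function.Injective (fun y : F => y ^ p ^ i) := by
          have := Function.Injective.iterate (frobenius_inj F p) i
          have heq : (fun y : F => y ^ p ^ i) = (frobenius F p)^[i] := by
            funext y; rw [iterate_frobenius]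
          rw [heq]; exact this
        apply hinj
        show (x ^ p ^ d) ^ p ^ i = x ^ p ^ i
        rw [← pow_mul, ← pow_add]
        have : d + i = j := by omega
        rw [this, h x]
      set P : Polynomial F := Polynomial.X ^ (p ^ d) - Polynomial.X with hP
      have h2 : 1 < p ^ d := Nat.one_lt_pow (by omega) hp1
      have hdeg : P.natDegree = p ^ d := by
        rw [hP, Polynomial.natDegree_sub_eq_left_of_natDegree_lt]
        · exact Polynomial.natDegree_X_pow _
        · rw [Polynomial.natDegree_X_pow, Polynomial.natDegree_X]; omega
      have hPne : P ≠ 0 := by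
        intro h0
        rw [h0] at hdeg
        simp [Polynomial.natDegree_zero] at hdeg
        omega
      have hsub : (Finset.univ : Finset F) ⊆ P.roots.toFinset := by
        intro x _
        rw [Multiset.mem_toFinset, Polynomial.mem_roots hPne]
        simp [hP, Polynomial.IsRoot, sub_eq_zero, hfix x]
      have hle : Fintype.card F ≤ p ^ d :=
        calc Fintype.card F = (Finset.univ : Finset F).card := rfl
        _ ≤ P.roots.toFinset.card := Finset.card_le_card hsub
        _ ≤ Multiset.card P.roots := Multiset.toFinset_card_le _
        _ ≤ P.natDegree := Polynomial.card_roots' P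
        _ = p ^ d := hdeg
      have : p ^ d < p ^ k := Nat.pow_lt_pow_right hp1 (by omega)
      omega
  rcases le_total i j with hij | hij
  · exact key i j hi hj h hij
  · exact (key j i hj hi (fun x => (h x).symm) hij).symm

set_option maxHeartbeats 2000000 in
set_option linter.unusedTactic false in
/-- Peisert situation. Let `p ≡ 3 (mod 4)` be a prime, `k` even,
`q = p^k`, `F = GF(q)`, `ω` a generator of `Fˣ`, and `C = ⟨ω⁴⟩`. The group
`G₀ ≤ Sym(F)` generated by `x ↦ ω⁴ · x` and `x ↦ ω · x^p` has order `k(q-1)/4` and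
exactly two orbits on `F \ {0}`, both of size `(q-1)/2`, namely `C ∪ ωC` and
`ω²C ∪ ω³C`. -/
theorem peisert_group_orbits
    (p k q : ℕ) [Fact p.Prime] (hp4 : p % 4 = 3)
    (hk : 0 < k) (hkeven : Even k) (hq : q = p ^ k)
    (F : Type*) [Field F] [Fintype F] [CharP F p] (hF : Fintype.card F = q)
    (ω : Fˣ) (hω : ∀ x : Fˣ, x ∈ Subgroup.zpowers ω)
    (G₀ : Subgroup (Equiv.Perm F))
    (hG₀ : G₀ = Subgroup.closure {mulPerm (ω ^ 4), mulPerm ω * frobPerm F p}) :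
    Nat.card G₀ = k * (q - 1) / 4 ∧
    MulAction.orbit G₀ ((1 : F)) = quarticCoset ω 0 ∪ quarticCoset ω 1 ∧
    MulAction.orbit G₀ ((ω : F) ^ 2) = quarticCoset ω 2 ∪ quarticCoset ω 3 ∧
    (∀ x : F, x ≠ 0 →
      MulAction.orbit G₀ x = quarticCoset ω 0 ∪ quarticCoset ω 1 ∨
      MulAction.orbit G₀ x = quarticCoset ω 2 ∪ quarticCoset ω 3) ∧
    (quarticCoset ω 0 ∪ quarticCoset ω 1).ncard = (q - 1) / 2 ∧
    (quarticCoset ω 2 ∪ quarticCoset ω 3).ncard = (q - 1) / 2 := by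
  classical
  have hp1 : 1 < p := (Fact.out : p.Prime).one_lt
  have hq1 : 1 < q := by rw [hq]; exact Nat.one_lt_pow (by omega) hp1
  have hcardU : Fintype.card Fˣ = q - 1 := by rw [Fintype.card_units, hF]
  have hordω : orderOf ω = q - 1 := by
    rw [orderOf_eq_card_of_forall_mem_zpowers hω, Nat.card_eq_fintype_card, hcardU]
  have hqmod : q % 4 = 1 := by
    rw [hq]; simpa [hkeven] using peisert_pow_mod4 hp4 k
  have hdvd4 : 4 ∣ q - 1 := by omega
  have hω0 : (ω : F) ≠ 0 := Units.ne_zero ω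
  set C : Subgroup Fˣ := Subgroup.zpowers (ω ^ 4) with hC
  set b : Equiv.Perm F := mulPerm ω * frobPerm F p with hbdef
  set S : ℕ → ℕ := fun i => ∑ t ∈ Finset.range i, p ^ t with hSdef
  have hS0 : S 0 = 0 := rfl
  have hSsucc : ∀ n, S (n + 1) = S n + p ^ n := fun n => Finset.sum_range_succ _ _
  have hS1 : S 1 = 1 := by rw [hSsucc, hS0]; simp
  have hSmod : ∀ i, S i % 4 = if Even i then 0 else 1 := fun i => peisert_geom_mod4 hp4 i
  have hpmod : ∀ i, p ^ i % 4 = if Even i then 1 else 3 := fun i => peisert_pow_mod4 hp4 i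
  have hωmem4 : ∀ n : ℕ, 4 ∣ n → ω ^ n ∈ C := by
    rintro n ⟨t, rfl⟩
    rw [pow_mul]
    exact C.pow_mem (Subgroup.mem_zpowers _) t
  have hSk4 : 4 ∣ S k := by
    have := hSmod k
    rw [if_pos hkeven] at this
    omega
  -- basic computations with the permutations
  have hmulP : ∀ (u : Fˣ) (x : F), mulPerm u x = (u : F) * x := fun u x => rfl
  have hmulPerm_mul : ∀ u v : Fˣ, mulPerm (u * v) = mulPerm u * mulPerm v := by
    intro u v; apply Equiv.ext; intro x
    simp [hmulP, Equiv.Perm.mul_apply, mul_assoc]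
  have hmulPerm_one : mulPerm (1 : Fˣ) = 1 := by
    apply Equiv.ext; intro x; simp [hmulP]
  let MP : Fˣ →* Equiv.Perm F :=
    { toFun := mulPerm, map_one' := hmulPerm_one, map_mul' := hmulPerm_mul }
  have hmulPerm_pow : ∀ (u : Fˣ) (n : ℕ), mulPerm (u ^ n) = (mulPerm u) ^ n :=
    fun u n => MP.map_pow u n
  have hmulPerm_zpow : ∀ (u : Fˣ) (n : ℤ), mulPerm (u ^ n) = (mulPerm u) ^ n :=
    fun u n => MP.map_zpow u n
  have hb1 : ∀ x : F, b x = (ω : F) * x ^ p := fun x => rfl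
  have hb : ∀ (i : ℕ) (x : F), (b ^ i) x = (ω : F) ^ S i * x ^ p ^ i := by
    intro i
    induction i with
    | zero => intro x; simp [hS0]
    | succ n ih =>
      intro x
      rw [pow_succ, Equiv.Perm.mul_apply, hb1, ih, hSsucc, pow_add, pow_succ]
      ring
  have hxq : ∀ x : F, x ^ p ^ k = x := by
    intro x; rw [← hq, ← hF]; exact FiniteField.pow_card x
  have hbk : b ^ k = mulPerm (ω ^ S k) := by
    apply Equiv.ext; intro x
    rw [hb, hxq, hmulP, Units.val_pow_eq_pow_val]
  have hcomm : ∀ (v : Fˣ) (i : ℕ), b ^ i * mulPerm v = mulPerm (v ^ p ^ i) * b ^ i := by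
    intro v i; apply Equiv.ext; intro x
    rw [Equiv.Perm.mul_apply, Equiv.Perm.mul_apply, hb, hb, hmulP, hmulP,
      Units.val_pow_eq_pow_val]
    ring
  -- the explicit description of G₀
  set Hcar : Set (Equiv.Perm F) :=
    {σ | ∃ u : Fˣ, u ∈ C ∧ ∃ i : ℕ, σ = mulPerm u * b ^ i} with hHcar
  have hmul_mem : ∀ σ ∈ Hcar, ∀ τ ∈ Hcar, σ * τ ∈ Hcar := by
    rintro σ ⟨u, hu, i, rfl⟩ τ ⟨v, hv, j, rfl⟩
    refine ⟨u * v ^ p ^ i, C.mul_mem hu (C.pow_mem hv _), i + j, ?_⟩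
    calc (mulPerm u * b ^ i) * (mulPerm v * b ^ j)
        = mulPerm u * ((b ^ i * mulPerm v) * b ^ j) := by group
      _ = mulPerm u * ((mulPerm (v ^ p ^ i) * b ^ i) * b ^ j) := by rw [hcomm]
      _ = mulPerm (u * v ^ p ^ i) * b ^ (i + j) := by rw [hmulPerm_mul, pow_add]; group
  have hone_mem : (1 : Equiv.Perm F) ∈ Hcar :=
    ⟨1, C.one_mem, 0, by rw [hmulPerm_one, pow_zero, one_mul]⟩
  have hpow_mem : ∀ σ ∈ Hcar, ∀ n : ℕ, σ ^ n ∈ Hcar := by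
    intro σ hσ n
    induction n with
    | zero => simpa using hone_mem
    | succ m ih => rw [pow_succ]; exact hmul_mem _ ih _ hσ
  let H : Subgroup (Equiv.Perm F) :=
    { carrier := Hcar
      one_mem' := hone_mem
      mul_mem' := fun ha hb => hmul_mem _ ha _ hb
      inv_mem' := by
        intro σ hσ
        have hord : 0 < orderOf σ := orderOf_pos σ
        have hinv : σ⁻¹ = σ ^ (orderOf σ - 1) :=
          inv_eq_of_mul_eq_one_right
            (by rw [← pow_succ', Nat.sub_add_cancel hord, pow_orderOf_eq_one])
        show σ⁻¹ ∈ Hcar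
        rw [hinv]
        exact hpow_mem σ hσ _ }
  have hmemH : ∀ σ : Equiv.Perm F, σ ∈ H ↔ σ ∈ Hcar := fun σ => Iff.rfl
  have hbmem : b ∈ H := ⟨1, C.one_mem, 1, by rw [hmulPerm_one, one_mul, pow_one]⟩
  have hamem : mulPerm (ω ^ 4) ∈ H := ⟨ω ^ 4, Subgroup.mem_zpowers _, 0, by rw [pow_zero, mul_one]⟩
  have hGH : G₀ = H := by
    rw [hG₀]
    apply le_antisymm
    · rw [Subgroup.closure_le]
      intro σ hσ
      simp only [Set.mem_insert_iff, Set.mem_singleton_iff] at hσ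
      rcases hσ with rfl | rfl
      · exact hamem
      · exact hbmem
    · intro σ hσ
      obtain ⟨u, hu, i, rfl⟩ := (hmemH σ).mp hσ
      apply Subgroup.mul_mem
      · obtain ⟨m, rfl⟩ := Subgroup.mem_zpowers_iff.mp hu
        rw [hmulPerm_zpow]
        exact Subgroup.zpow_mem _ (Subgroup.subset_closure (Set.mem_insert _ _)) m
      · refine Subgroup.pow_mem _ (Subgroup.subset_closure ?_) i
        right
        rfl
  -- cardinality of C
  have hcardC : Nat.card C = (q - 1) / 4 := by
    rw [hC, Nat.card_zpowers, orderOf_pow' ω (by norm_num), hordω, Nat.gcd_eq_right hdvd4]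
  -- the counting bijection
  let f : C × Fin k → G₀ := fun ui =>
    ⟨mulPerm ui.1 * b ^ (ui.2 : ℕ), by
      rw [hGH]; exact (hmemH _).mpr ⟨ui.1, ui.1.2, (ui.2 : ℕ), rfl⟩⟩
  have hfsurj : Function.Surjective f := by
    rintro ⟨g, hg⟩
    rw [hGH] at hg
    obtain ⟨u, hu, i, rfl⟩ := (hmemH _).mp hg
    refine ⟨⟨⟨u * (ω ^ S k) ^ (i / k), C.mul_mem hu (C.pow_mem (hωmem4 _ hSk4) _)⟩,
      ⟨i % k, Nat.mod_lt i hk⟩⟩, ?_⟩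
    apply Subtype.ext
    show mulPerm (u * (ω ^ S k) ^ (i / k)) * b ^ (i % k) = mulPerm u * b ^ i
    conv_rhs => rw [← Nat.div_add_mod i k]
    rw [pow_add, pow_mul, hbk, ← hmulPerm_pow, hmulPerm_mul, mul_assoc]
  have hfinj : Function.Injective f := by
    rintro ⟨⟨u, hu⟩, i⟩ ⟨⟨v, hv⟩, j⟩ hf
    have hperm : mulPerm u * b ^ (i : ℕ) = mulPerm v * b ^ (j : ℕ) :=
      congrArg Subtype.val hf
    have happ : ∀ x : F,
        (u : F) * ((ω : F) ^ S (i : ℕ) * x ^ p ^ (i : ℕ)) =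
        (v : F) * ((ω : F) ^ S (j : ℕ) * x ^ p ^ (j : ℕ)) := by
      intro x
      have h := congrArg (fun σ : Equiv.Perm F => σ x) hperm
      simpa only [Equiv.Perm.mul_apply, hb, hmulP] using h
    have h1 : (u : F) * (ω : F) ^ S (i : ℕ) = (v : F) * (ω : F) ^ S (j : ℕ) := by
      have := happ 1
      simpa using this
    have hcne : (v : F) * (ω : F) ^ S (j : ℕ) ≠ 0 :=
      mul_ne_zero (Units.ne_zero v) (pow_ne_zero _ hω0)
    have hxx : ∀ x : F, x ^ p ^ (i : ℕ) = x ^ p ^ (j : ℕ) := by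
      intro x
      have h2 := happ x
      rw [← mul_assoc, ← mul_assoc, h1] at h2
      exact mul_left_cancel₀ hcne h2
    have hij : (i : ℕ) = (j : ℕ) :=
      peisert_frob_pow_inj F p k (by rw [hF, hq]) i.2 j.2 hxx
    have huv : u = v := by
      apply Units.ext
      rw [hij] at h1
      exact mul_right_cancel₀ (pow_ne_zero _ hω0) h1
    have hijf : i = j := Fin.ext hij
    simp only [Prod.mk.injEq, Subtype.mk.injEq]
    exact ⟨huv, hijf⟩
  have hcardG : Nat.card G₀ = k * (q - 1) / 4 := by
    have hbij := Nat.card_eq_of_bijective f ⟨hfinj, hfsurj⟩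
    rw [Nat.card_prod, hcardC] at hbij
    have hfin : Nat.card (Fin k) = k := by simp
    rw [hfin] at hbij
    rw [← hbij, Nat.mul_div_assoc k hdvd4, mul_comm]
  -- orbit description
  have hsmul : ∀ (g : G₀) (x : F), g • x = (g : Equiv.Perm F) x := fun g x => rfl
  have horb : ∀ x y : F,
      (y ∈ MulAction.orbit G₀ x ↔
        ∃ u ∈ C, ∃ i : ℕ, y = (u : F) * ((ω : F) ^ S i * x ^ p ^ i)) := by
    intro x y
    rw [MulAction.mem_orbit_iff]
    constructor
    · rintro ⟨⟨g, hg⟩, rfl⟩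
      rw [hGH] at hg
      obtain ⟨u, hu, i, rfl⟩ := (hmemH _).mp hg
      exact ⟨u, hu, i, by rw [hsmul]; simp only [Equiv.Perm.mul_apply]; rw [hb, hmulP]⟩
    · rintro ⟨u, hu, i, rfl⟩
      refine ⟨⟨mulPerm u * b ^ i, by rw [hGH]; exact (hmemH _).mpr ⟨u, hu, i, rfl⟩⟩, ?_⟩
      rw [hsmul]; simp only [Equiv.Perm.mul_apply]; rw [hb, hmulP]
  have horb1 : MulAction.orbit G₀ (1 : F) = quarticCoset ω 0 ∪ quarticCoset ω 1 := by
    ext y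
    rw [Set.mem_union, horb]
    constructor
    · rintro ⟨u, hu, i, rfl⟩
      have hmod := hSmod i
      by_cases hev : Even i
      · left
        rw [if_pos hev] at hmod
        obtain ⟨t, ht⟩ : ∃ t, S i = 4 * t := ⟨S i / 4, by omega⟩
        refine ⟨u * ω ^ (4 * t), C.mul_mem hu (hωmem4 _ ⟨t, rfl⟩), ?_⟩
        push_cast
        rw [ht]
        ring
      · right
        rw [if_neg hev] at hmod
        obtain ⟨t, ht⟩ : ∃ t, S i = 4 * t + 1 := ⟨S i / 4, by omega⟩
        refine ⟨u * ω ^ (4 * t), C.mul_mem hu (hωmem4 _ ⟨t, rfl⟩), ?_⟩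
        push_cast
        rw [ht]
        ring
    · rintro (⟨c, hc, rfl⟩ | ⟨c, hc, rfl⟩)
      · refine ⟨c, hc, 0, ?_⟩
        rw [hS0]
        push_cast
        ring
      · refine ⟨c, hc, 1, ?_⟩
        rw [hS1]
        push_cast
        ring
  have horb2 : MulAction.orbit G₀ ((ω : F) ^ 2) = quarticCoset ω 2 ∪ quarticCoset ω 3 := by
    ext y
    rw [Set.mem_union, horb]
    constructor
    · rintro ⟨u, hu, i, rfl⟩
      have hmod := hSmod i
      have hmod' := hpmod i
      by_cases hev : Even i
      · left
        rw [if_pos hev] at hmod hmod'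
        obtain ⟨t, ht⟩ : ∃ t, S i + 2 * p ^ i = 4 * t + 2 :=
          ⟨(S i + 2 * p ^ i) / 4, by omega⟩
        refine ⟨u * ω ^ (4 * t), C.mul_mem hu (hωmem4 _ ⟨t, rfl⟩), ?_⟩
        rw [← pow_mul, ← pow_add, ht]
        push_cast
        ring
      · right
        rw [if_neg hev] at hmod hmod'
        obtain ⟨t, ht⟩ : ∃ t, S i + 2 * p ^ i = 4 * t + 3 :=
          ⟨(S i + 2 * p ^ i) / 4, by omega⟩
        refine ⟨u * ω ^ (4 * t), C.mul_mem hu (hωmem4 _ ⟨t, rfl⟩), ?_⟩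
        rw [← pow_mul, ← pow_add, ht]
        push_cast
        ring
    · rintro (⟨c, hc, rfl⟩ | ⟨c, hc, rfl⟩)
      · refine ⟨c, hc, 0, ?_⟩
        rw [hS0, ← pow_mul, ← pow_add]
        push_cast
        norm_num
        ring
      · obtain ⟨t0, ht0⟩ : ∃ t0, S 1 + 2 * p ^ 1 = 4 * t0 + 3 :=
          ⟨(p - 1) / 2, by rw [hS1, pow_one]; omega⟩
        refine ⟨c * (ω ^ (4 * t0))⁻¹,
          C.mul_mem hc (C.inv_mem (hωmem4 _ ⟨t0, rfl⟩)), 1, ?_⟩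
        rw [← pow_mul, ← pow_add, ht0]
        push_cast
        field_simp
        ring
  -- every nonzero element lies in one of the two unions
  have hcover : ∀ x : F, x ≠ 0 →
      (x ∈ quarticCoset ω 0 ∪ quarticCoset ω 1) ∨
      (x ∈ quarticCoset ω 2 ∪ quarticCoset ω 3) := by
    intro x hx
    obtain ⟨n, hn⟩ :=
      (Submonoid.mem_powers_iff _ _).mp
        (mem_powers_iff_mem_zpowers.mpr (hω (Units.mk0 x hx)))
    have hxval : x = (ω : F) ^ n := by
      have := congrArg Units.val hn
      simpa using this.symm
    have hmem : ∀ r t : ℕ, n = 4 * t + r → x ∈ quarticCoset ω r := by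
      intro r t hrt
      refine ⟨ω ^ (4 * t), hωmem4 _ ⟨t, rfl⟩, ?_⟩
      rw [hxval, hrt]
      push_cast
      ring
    have h4 : n % 4 = 0 ∨ n % 4 = 1 ∨ n % 4 = 2 ∨ n % 4 = 3 := by omega
    rcases h4 with h | h | h | h
    · exact Or.inl (Or.inl (hmem 0 (n / 4) (by omega)))
    · exact Or.inl (Or.inr (hmem 1 (n / 4) (by omega)))
    · exact Or.inr (Or.inl (hmem 2 (n / 4) (by omega)))
    · exact Or.inr (Or.inr (hmem 3 (n / 4) (by omega)))
  have hfour : ∀ x : F, x ≠ 0 →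
      MulAction.orbit G₀ x = quarticCoset ω 0 ∪ quarticCoset ω 1 ∨
      MulAction.orbit G₀ x = quarticCoset ω 2 ∪ quarticCoset ω 3 := by
    intro x hx
    rcases hcover x hx with h | h
    · left
      rw [← horb1] at h
      rw [MulAction.orbit_eq_iff.mpr h, horb1]
    · right
      rw [← horb2] at h
      rw [MulAction.orbit_eq_iff.mpr h, horb2]
  -- cardinalities
  have hinj2 : ∀ j : ℕ, Function.Injective (fun c : Fˣ => (ω : F) ^ j * (c : F)) := by
    intro j c c' hcc
    exact Units.ext (mul_left_cancel₀ (pow_ne_zero _ hω0) hcc)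
  have hcoset_eq : ∀ j : ℕ,
      quarticCoset ω j = (fun c : Fˣ => (ω : F) ^ j * (c : F)) '' (C : Set Fˣ) := by
    intro j; ext x
    simp only [quarticCoset, Set.mem_image, Set.mem_setOf_eq, SetLike.mem_coe]
    constructor
    · rintro ⟨c, hc, rfl⟩; exact ⟨c, hc, rfl⟩
    · rintro ⟨c, hc, rfl⟩; exact ⟨c, hc, rfl⟩
  have hcoset_card : ∀ j : ℕ, (quarticCoset ω j).ncard = (q - 1) / 4 := by
    intro j
    rw [hcoset_eq j, Set.ncard_image_of_injective _ (hinj2 j)]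
    rw [← Nat.card_coe_set_eq, SetLike.coe_sort_coe, hcardC]
  have hdisj : ∀ j j' : ℕ, j < 4 → j' < 4 → j ≠ j' →
      Disjoint (quarticCoset ω j) (quarticCoset ω j') := by
    intro j j' hj hj' hne
    rw [Set.disjoint_left]
    rintro x ⟨c, hc, rfl⟩ ⟨c', hc', heq⟩
    obtain ⟨m, rfl⟩ := Subgroup.mem_zpowers_iff.mp hc
    obtain ⟨m', rfl⟩ := Subgroup.mem_zpowers_iff.mp hc'
    have hequ : (ω : Fˣ) ^ ((j : ℤ) + 4 * m) = ω ^ ((j' : ℤ) + 4 * m') := by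
      apply Units.ext
      rw [zpow_add, zpow_add, zpow_mul, zpow_mul]
      push_cast
      push_cast at heq
      convert heq using 2 <;> norm_cast
    have hone : (ω : Fˣ) ^ ((j : ℤ) + 4 * m - ((j' : ℤ) + 4 * m')) = 1 := by
      rw [zpow_sub, hequ, mul_inv_cancel]
    have hdvd := (orderOf_dvd_iff_zpow_eq_one).mpr hone
    rw [hordω] at hdvd
    have h4q : (4 : ℤ) ∣ ((q : ℤ) - 1) := by
      have := Int.natCast_dvd_natCast.mpr hdvd4
      omega
    have h4d : (4 : ℤ) ∣ ((j : ℤ) + 4 * m - ((j' : ℤ) + 4 * m')) := by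
      refine dvd_trans h4q ?_
      have : ((q - 1 : ℕ) : ℤ) = (q : ℤ) - 1 := by omega
      rwa [this] at hdvd
    omega
  have hu01 : (quarticCoset ω 0 ∪ quarticCoset ω 1).ncard = (q - 1) / 2 := by
    rw [Set.ncard_union_eq (hdisj 0 1 (by norm_num) (by norm_num) (by norm_num))
      (Set.toFinite _) (Set.toFinite _), hcoset_card, hcoset_card]
    omega
  have hu23 : (quarticCoset ω 2 ∪ quarticCoset ω 3).ncard = (q - 1) / 2 := by
    rw [Set.ncard_union_eq (hdisj 2 3 (by norm_num) (by norm_num) (by norm_num))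
      (Set.toFinite _) (Set.toFinite _), hcoset_card, hcoset_card]
    omega
  exact ⟨hcardG, horb1, horb2, hfour, hu01, hu23⟩
end

section
/- Let F = GF(9) and let ω be a generator of F*. The Paley graph on F (vertices F, with x ~ y iff x ≠ y and x − y is a square in F*) is isomorphic to the Peisert graph on F (vertices F, with x ~ y iff x − y ∈ ⟨ω⁴⟩ ∪ ω⟨ω⁴⟩). -/
/-- Paley adjacency on a field: `x ~ y` iff `x ≠ y` and `x - y` is a nonzero square. -/
def paleyAdj {F : Type*} [Field F] (x y : F) : Prop :=
  x ≠ y ∧ ∃ z : F, z ≠ 0 ∧ x - y = z ^ 2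

/-- Peisert adjacency on a field with respect to a generator `ω` of `Fˣ`:
`x ~ y` iff `x - y ∈ ⟨ω⁴⟩ ∪ ω⟨ω⁴⟩`. -/
def peisertAdj {F : Type*} [Field F] (ω : Fˣ) (x y : F) : Prop :=
  x ≠ y ∧ ∃ c : Fˣ, c ∈ Subgroup.zpowers (ω ^ 4) ∧
    (x - y = (c : F) ∨ x - y = (ω : F) * (c : F))

/-- The auxiliary additive map realizing the isomorphism. -/
def auxMap {F : Type*} [Field F] (t : F) (x : F) : F :=
  (t ^ 3 - 1) * x + (-1 - t ^ 3) * x ^ 3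

/-- On `GF(9)` the Paley graph is isomorphic to the Peisert graph. -/
theorem paley_iso_peisert_nine
    (F : Type*) [Field F] [Fintype F] (hF : Fintype.card F = 9)
    (ω : Fˣ) (hω : ∀ x : Fˣ, x ∈ Subgroup.zpowers ω) :
    ∃ e : F ≃ F, ∀ x y : F, paleyAdj x y ↔ peisertAdj ω (e x) (e y) := by
  set t : F := (ω : F) with htdef
  -- characteristic 3
  have h9 : (9 : F) = 0 := by
    have := Nat.cast_card_eq_zero F
    rw [hF] at this
    exact_mod_cast this
  have h3 : (3 : F) = 0 := by
    have h : (3 : F) * 3 = 0 := by linear_combination h9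
    rcases mul_eq_zero.mp h with h | h <;> exact h
  have h2 : (2 : F) ≠ 0 := by
    intro h
    exact one_ne_zero (α := F) (by linear_combination h3 - h)
  -- order of ω is 8
  have hcardu : Nat.card Fˣ = 8 := by
    rw [Nat.card_units, Nat.card_eq_fintype_card, hF]
  have hord : orderOf ω = 8 := by
    rw [orderOf_eq_card_of_forall_mem_zpowers hω, hcardu]
  have hpow : ∀ k : ℕ, ω ^ k = 1 ↔ 8 ∣ k := by
    intro k; rw [← orderOf_dvd_iff_pow_eq_one, hord]
  have htne : t ≠ 0 := ω.ne_zero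
  have hcoe : ∀ k : ℕ, t ^ k = 1 ↔ ω ^ k = 1 := by
    intro k
    rw [htdef, ← Units.val_pow_eq_pow_val, Units.val_eq_one]
  have ht8 : t ^ 8 = 1 := (hcoe 8).mpr ((hpow 8).mpr ⟨1, rfl⟩)
  have ht4ne : t ^ 4 ≠ 1 := by
    intro h
    have := (hpow 4).mp ((hcoe 4).mp h)
    omega
  have ht2ne : t ^ 2 ≠ 1 := by
    intro h
    have := (hpow 2).mp ((hcoe 2).mp h)
    omega
  have ht1ne : t ≠ 1 := by
    intro h
    have : t ^ 1 = 1 := by rw [pow_one, h]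
    have := (hpow 1).mp ((hcoe 1).mp this)
    omega
  have ht4 : t ^ 4 = -1 := by
    have h : (t ^ 4 - 1) * (t ^ 4 + 1) = 0 := by linear_combination ht8
    rcases mul_eq_zero.mp h with h | h
    · exact absurd (by linear_combination h) ht4ne
    · linear_combination h
  have ht2nem : t ^ 2 ≠ -1 := by
    intro h
    exact ht4ne (by linear_combination (t ^ 2 - 1) * h)
  have htm1ne : t ≠ -1 := by
    intro h
    exact ht2ne (by linear_combination (t - 1) * h)
  -- the four-element factorizations
  have hfactor : ∀ z : F, z ≠ 0 →
      z ^ 2 = 1 ∨ z ^ 2 = -1 ∨ z ^ 2 = t ^ 2 ∨ z ^ 2 = -t ^ 2 := by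
    intro z hz
    have hz8 : z ^ 8 = 1 := by
      have := FiniteField.pow_card_sub_one_eq_one z hz
      rwa [hF] at this
    have h : (z ^ 2 - 1) * ((z ^ 2 + 1) * ((z ^ 2 - t ^ 2) * (z ^ 2 + t ^ 2))) = 0 := by
      linear_combination hz8 + (1 - z ^ 4) * ht4
    rcases mul_eq_zero.mp h with h | h
    · exact Or.inl (by linear_combination h)
    rcases mul_eq_zero.mp h with h | h
    · exact Or.inr (Or.inl (by linear_combination h))
    rcases mul_eq_zero.mp h with h | h
    · exact Or.inr (Or.inr (Or.inl (by linear_combination h)))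
    · exact Or.inr (Or.inr (Or.inr (by linear_combination h)))
  -- injectivity of the map
  have finj : Function.Injective (auxMap t) := by
    intro a b hab
    by_contra hne
    have hz0 : a - b ≠ 0 := sub_ne_zero.mpr hne
    have hz : auxMap t (a - b) = 0 := by
      have hcube : (a - b) ^ 3 = a ^ 3 - b ^ 3 := by
        linear_combination (a * b ^ 2 - a ^ 2 * b) * h3
      unfold auxMap at hab ⊢
      rw [hcube]
      linear_combination hab
    set z : F := a - b with hzdef
    have hk : (t ^ 3 - 1) + (-1 - t ^ 3) * z ^ 2 = 0 := by
      have h : z * ((t ^ 3 - 1) + (-1 - t ^ 3) * z ^ 2) = 0 := by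
        unfold auxMap at hz; linear_combination hz
      rcases mul_eq_zero.mp h with h | h
      · exact absurd h hz0
      · exact h
    rcases hfactor z hz0 with h | h | h | h
    · exact h2 (by linear_combination -hk + (-1 - t ^ 3) * h)
    · have h' : (2 : F) * t ^ 3 = 0 := by linear_combination hk + (1 + t ^ 3) * h
      rcases mul_eq_zero.mp h' with h' | h'
      · exact h2 h'
      · exact pow_ne_zero 3 htne h'
    · have h' : (t ^ 2 + 1) * (t - 1) = 0 := by
        linear_combination hk + (1 + t ^ 3) * h + t * ht4
      rcases mul_eq_zero.mp h' with h' | h'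
      · exact ht2nem (by linear_combination h')
      · exact ht1ne (by linear_combination h')
    · have h' : (t ^ 2 - 1) * (t + 1) = 0 := by
        linear_combination hk + (1 + t ^ 3) * h - t * ht4
      rcases mul_eq_zero.mp h' with h' | h'
      · exact ht2ne (by linear_combination h')
      · exact htm1ne (by linear_combination h')
  -- characterization of nonzero squares
  have hsq : ∀ d : F, (∃ z : F, z ≠ 0 ∧ d = z ^ 2) ↔
      (d = 1 ∨ d = -1 ∨ d = t ^ 2 ∨ d = -t ^ 2) := by
    intro d
    constructor
    · rintro ⟨z, hz, rfl⟩
      exact hfactor z hz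
    · rintro (h | h | h | h)
      · exact ⟨1, one_ne_zero, by rw [h]; ring⟩
      · exact ⟨t ^ 2, pow_ne_zero _ htne, by rw [h]; linear_combination -ht4⟩
      · exact ⟨t, htne, by rw [h]⟩
      · exact ⟨t ^ 3, pow_ne_zero _ htne, by rw [h]; linear_combination (-t ^ 2) * ht4⟩
  -- characterization of the Peisert set
  have hpe : ∀ d : F, (∃ c : Fˣ, c ∈ Subgroup.zpowers (ω ^ 4) ∧
      (d = (c : F) ∨ d = t * (c : F))) ↔
      (d = 1 ∨ d = -1 ∨ d = t ∨ d = -t) := by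
    intro d
    constructor
    · rintro ⟨c, hc, hd⟩
      obtain ⟨m, hm⟩ := hc
      have hm' : (ω ^ 4 : Fˣ) ^ m = c := hm
      have h8 : (ω ^ 4 : Fˣ) ^ (2 : ℕ) = 1 := by
        have h := (hpow 8).mpr ⟨1, rfl⟩
        rw [show (8 : ℕ) = 4 * 2 by norm_num, pow_mul] at h
        exact h
      have hu : c ^ (2 : ℕ) = 1 := by
        rw [← hm', ← zpow_natCast ((ω ^ 4 : Fˣ) ^ m) 2, ← zpow_mul, mul_comm,
          zpow_mul, zpow_natCast, h8, one_zpow]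
      have hc2 : (c : F) ^ 2 = 1 := by
        rw [← Units.val_pow_eq_pow_val, hu, Units.val_one]
      have hc1 : (c : F) = 1 ∨ (c : F) = -1 := by
        have h : ((c : F) - 1) * ((c : F) + 1) = 0 := by
          linear_combination hc2
        rcases mul_eq_zero.mp h with h | h
        · exact Or.inl (by linear_combination h)
        · exact Or.inr (by linear_combination h)
      rcases hd with rfl | rfl <;> rcases hc1 with h | h <;> rw [h]
      · exact Or.inl rfl
      · exact Or.inr (Or.inl rfl)
      · exact Or.inr (Or.inr (Or.inl (mul_one t)))
      · exact Or.inr (Or.inr (Or.inr (by ring)))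
    · have hmem : (ω ^ 4 : Fˣ) ∈ Subgroup.zpowers (ω ^ 4) := Subgroup.mem_zpowers _
      have hval : ((ω ^ 4 : Fˣ) : F) = -1 := by
        rw [Units.val_pow_eq_pow_val, ← htdef, ht4]
      rintro (h | h | h | h)
      · exact ⟨1, Subgroup.one_mem _, Or.inl (by rw [h, Units.val_one])⟩
      · exact ⟨ω ^ 4, hmem, Or.inl (by rw [h, hval])⟩
      · exact ⟨1, Subgroup.one_mem _, Or.inr (by rw [h, Units.val_one, mul_one])⟩
      · exact ⟨ω ^ 4, hmem, Or.inr (by rw [h, hval]; ring)⟩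
  -- images of the square classes under the map
  have hf1 : auxMap t 1 = 1 := by unfold auxMap; linear_combination -h3
  have hfm1 : auxMap t (-1) = -1 := by unfold auxMap; linear_combination h3
  have hf2 : auxMap t (t ^ 2) = t := by
    unfold auxMap
    linear_combination (-t ^ 5 - t ^ 2 + 2 * t) * ht4 + (-t) * h3
  have hfm2 : auxMap t (-t ^ 2) = -t := by
    unfold auxMap
    linear_combination (t ^ 5 + t ^ 2 - 2 * t) * ht4 + t * h3
  -- subtraction rule
  have hfsub : ∀ a b : F, auxMap t a - auxMap t b = auxMap t (a - b) := by
    intro a b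
    have hcube : (a - b) ^ 3 = a ^ 3 - b ^ 3 := by
      linear_combination (a * b ^ 2 - a ^ 2 * b) * h3
    unfold auxMap
    rw [hcube]
    ring
  -- assemble
  refine ⟨Equiv.ofBijective (auxMap t) (Finite.injective_iff_bijective.mp finj), ?_⟩
  intro x y
  simp only [Equiv.ofBijective_apply, paleyAdj, peisertAdj]
  constructor
  · rintro ⟨hxy, hz⟩
    refine ⟨fun h => hxy (finj h), ?_⟩
    have hd := (hsq (x - y)).mp (by
      obtain ⟨z, hz0, hzz⟩ := hz
      exact ⟨z, hz0, hzz⟩)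
    apply (hpe (auxMap t x - auxMap t y)).mpr
    rw [hfsub]
    rcases hd with h | h | h | h <;> rw [h]
    · exact Or.inl hf1
    · exact Or.inr (Or.inl hfm1)
    · exact Or.inr (Or.inr (Or.inl hf2))
    · exact Or.inr (Or.inr (Or.inr hfm2))
  · rintro ⟨hfxy, hc⟩
    refine ⟨fun h => hfxy (by rw [h]), ?_⟩
    have hd := (hpe (auxMap t x - auxMap t y)).mp hc
    rw [hfsub] at hd
    apply (hsq (x - y)).mpr
    rcases hd with h | h | h | h
    · exact Or.inl (finj (by rw [h, hf1]))
    · exact Or.inr (Or.inl (finj (by rw [h, hfm1])))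
    · exact Or.inr (Or.inr (Or.inl (finj (by rw [h, hf2]))))
    · exact Or.inr (Or.inr (Or.inr (finj (by rw [h, hfm2]))))
end

section
/- Let p ≡ 3 (mod 4) be a prime, k an even positive integer, q = p^k, and ω a generator of GF(q)*. Then the Peisert graph on GF(q) is self-complementary: it is isomorphic to its complement graph. -/
private lemma peisert_adj_iff {F : Type*} [Field F] (ω : Fˣ) (x y : F) (hxy : x ≠ y)
    (m : ℤ) (hm : x - y = ((ω ^ m : Fˣ) : F)) :
    peisertAdj ω x y ↔
      ∃ c : Fˣ, c ∈ Subgroup.zpowers (ω ^ 4) ∧ (ω ^ m = c ∨ ω ^ m = ω * c) := by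
  simp only [peisertAdj, hxy, Ne, not_false_iff, true_and, hm, Units.ext_iff, Units.val_mul]

private lemma peisert_mem_iff {F : Type*} [Field F] (ω : Fˣ) (hd : 4 ∣ orderOf ω) (m : ℤ) :
    (∃ c : Fˣ, c ∈ Subgroup.zpowers (ω ^ 4) ∧ (ω ^ m = c ∨ ω ^ m = ω * c)) ↔
      (m % 4 = 0 ∨ m % 4 = 1) := by
  have h4 : (4 : ℤ) ∣ (orderOf ω : ℤ) := Int.natCast_dvd_natCast.mpr hd
  have hpow : ∀ j : ℤ, (ω ^ 4) ^ j = ω ^ (4 * j) := by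
    intro j
    rw [← zpow_natCast ω 4, ← zpow_mul]
    norm_num
  constructor
  · rintro ⟨c, hc, h | h⟩
    · obtain ⟨j, rfl⟩ := Subgroup.mem_zpowers_iff.mp hc
      rw [hpow, zpow_eq_zpow_iff_modEq] at h
      have := h.dvd
      have h44 : (4 : ℤ) ∣ 4 * j - m := dvd_trans h4 this
      omega
    · obtain ⟨j, rfl⟩ := Subgroup.mem_zpowers_iff.mp hc
      have h' : ω ^ m = ω ^ (4 * j + 1) := by
        rw [h, hpow, zpow_add, zpow_one, mul_comm]
      rw [zpow_eq_zpow_iff_modEq] at h'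
      have h44 : (4 : ℤ) ∣ (4 * j + 1) - m := dvd_trans h4 h'.dvd
      omega
  · rintro (h | h)
    · refine ⟨(ω ^ 4) ^ (m / 4), ⟨m / 4, rfl⟩, Or.inl ?_⟩
      rw [hpow]
      congr 1
      omega
    · refine ⟨(ω ^ 4) ^ (m / 4), ⟨m / 4, rfl⟩, Or.inr ?_⟩
      rw [hpow]
      have h1 : ω ^ m = ω ^ (4 * (m / 4) + 1) := by congr 1; omega
      rw [h1, zpow_add, zpow_one, mul_comm]

/-- For `q = p^k` with `p ≡ 3 (mod 4)` prime and `k` even, the Peisert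
graph on `GF(q)` is self-complementary. -/
theorem peisert_selfComplementary
    (p k q : ℕ) (hp : p.Prime) (hp4 : p % 4 = 3)
    (hk : 0 < k) (hkeven : Even k) (hq : q = p ^ k)
    (F : Type*) [Field F] [Fintype F] (hF : Fintype.card F = q)
    (ω : Fˣ) (hω : ∀ x : Fˣ, x ∈ Subgroup.zpowers ω) :
    ∃ e : F ≃ F, ∀ x y : F,
      peisertAdj ω x y ↔ (e x ≠ e y ∧ ¬ peisertAdj ω (e x) (e y)) := by
  -- 4 divides q - 1
  obtain ⟨n, rfl⟩ := hkeven
  have hqmod : q % 4 = 1 := by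
    have hodd : Odd (p ^ n) := (hp.odd_of_ne_two (by omega)).pow
    obtain ⟨b, hb⟩ := hodd
    have : q = (p ^ n) ^ 2 := by rw [hq, ← pow_mul]; ring_nf
    rw [this, hb]
    ring_nf
    omega
  have hq1 : 1 ≤ q := by
    rw [hq]; exact Nat.one_le_pow _ _ hp.pos
  have hord : orderOf ω = q - 1 := by
    rw [orderOf_eq_card_of_forall_mem_zpowers hω, Nat.card_units,
      Nat.card_eq_fintype_card, hF]
  have hd : 4 ∣ orderOf ω := by
    rw [hord]; omega
  -- the isomorphism: multiplication by ω²
  have hω2 : ((ω : F) ^ 2) ≠ 0 := pow_ne_zero 2 ω.ne_zero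
  refine ⟨Equiv.mulLeft₀ ((ω : F) ^ 2) hω2, fun x y => ?_⟩
  by_cases hxy : x = y
  · simp [peisertAdj, hxy]
  · have hexy : (ω : F) ^ 2 * x ≠ (ω : F) ^ 2 * y := by
      intro h
      exact hxy (mul_left_cancel₀ hω2 h)
    have hu : x - y ≠ 0 := sub_ne_zero.mpr hxy
    obtain ⟨m, hm⟩ := Subgroup.mem_zpowers_iff.mp (hω (Units.mk0 (x - y) hu))
    have hm' : x - y = ((ω ^ m : Fˣ) : F) := by rw [hm]; rfl
    have hm2 : (ω : F) ^ 2 * x - (ω : F) ^ 2 * y = ((ω ^ (m + 2) : Fˣ) : F) := by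
      have hsplit : (ω ^ (m + 2) : Fˣ) = ω ^ m * ω ^ (2 : ℕ) := by
        rw [← zpow_natCast ω 2, ← zpow_add]
        congr 1
      rw [hsplit, Units.val_mul, ← hm']
      push_cast
      ring
    rw [peisert_adj_iff ω x y hxy m hm', peisert_mem_iff ω hd m]
    simp only [Equiv.mulLeft₀_apply]
    rw [show ¬peisertAdj ω ((ω : F) ^ 2 * x) ((ω : F) ^ 2 * y) ↔
        ¬((m + 2) % 4 = 0 ∨ (m + 2) % 4 = 1) from
      not_congr ((peisert_adj_iff ω _ _ hexy (m + 2) hm2).trans (peisert_mem_iff ω hd (m + 2)))]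
    constructor
    · intro h; exact ⟨hexy, by omega⟩
    · rintro ⟨-, h⟩; omega
end

section
/- The Van Lint–Schrijver graph on GF(64) (vertices GF(64), with x ~ y iff x − y is a nonzero cube) is isomorphic to the bilinear forms graph H₂(2,3): the graph whose vertices are all 2×3 matrices over GF(2), two matrices being adjacent iff their difference has rank 1. -/
/-!
Since `|F| = 2⁶`, the field `F` has subfields `K₄` and `K₈` of degrees 2 and 3 over `GF(2)`.
The degrees are coprime, so `K₄` and `K₈` are linearly disjoint and the products of
`GF(2)`-bases of `K₄` and `K₈` form a basis of `F`. The resulting additive identification of `F`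
with `2 × 3` matrices sends the rank-one matrices `u vᵀ` exactly to the products `p r` with
`p ∈ K₄ˣ`, `r ∈ K₈ˣ`. These products make up the subgroup of order `21 = 3 · 7` of the cyclic
group `Fˣ` of order 63, which is the group of nonzero cubes.
-/

/-- Van Lint–Schrijver adjacency on a field: `x ~ y` iff `x - y` is a nonzero cube. -/
def vlsAdj {F : Type*} [Field F] (x y : F) : Prop :=
  x ≠ y ∧ ∃ z : F, z ≠ 0 ∧ x - y = z ^ 3

/-- Adjacency of the bilinear forms graph on `2 × 3` matrices over a field `K`:
two matrices are adjacent iff their difference has rank 1. -/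
def bilinearFormsAdj {K : Type*} [Field K] (A B : Matrix (Fin 2) (Fin 3) K) : Prop :=
  A ≠ B ∧ (A - B).rank = 1

open Polynomial Module Matrix

theorem Matrix.rank_eq_one_iff_exists_vecMulVec {m n K : Type*} [Fintype m] [Fintype n]
    [Field K] (M : Matrix m n K) :
    M.rank = 1 ↔ ∃ (u : m → K) (v : n → K), u ≠ 0 ∧ v ≠ 0 ∧ M = vecMulVec u v := by
  classical
  constructor
  · intro h
    rw [Matrix.rank, finrank_eq_one_iff'] at h
    obtain ⟨⟨w, y, hy⟩, hw0, hw⟩ := h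
    have hcol : ∀ j, ∃ c : K, c • w = M.col j := fun j => by
      obtain ⟨c, hc⟩ := hw ⟨M.col j, Pi.single j 1, mulVec_single_one M j⟩
      exact ⟨c, congrArg Subtype.val hc⟩
    choose c hc using hcol
    have hM : M = vecMulVec w c := by
      ext i j
      rw [vecMulVec_apply, ← Matrix.col_apply M j i, ← hc j, Pi.smul_apply, smul_eq_mul, mul_comm]
    refine ⟨w, c, fun h0 => hw0 (Subtype.ext h0), fun h0 => hw0 (Subtype.ext ?_), hM⟩
    change w = 0
    rw [← hy, mulVecLin_apply, hM, h0, vecMulVec_mulVec, zero_dotProduct]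
    simp
  · rintro ⟨u, v, hu, hv, rfl⟩
    obtain ⟨j, hj⟩ : ∃ j, v j ≠ 0 := Function.ne_iff.mp hv
    have hu_mem : u ∈ LinearMap.range (vecMulVec u v).mulVecLin :=
      ⟨Pi.single j (v j)⁻¹, by rw [mulVecLin_apply, vecMulVec_mulVec]; simp [hj]⟩
    exact le_antisymm (rank_vecMulVec_le u v)
      (finrank_pos_iff_exists_ne_zero.mpr ⟨⟨u, hu_mem⟩, fun h0 => hu (congrArg Subtype.val h0)⟩)

theorem IsCyclic.exists_pow_eq_iff_pow_eq_one {G : Type*} [CommGroup G] [IsCyclic G] [Finite G]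
    {n m : ℕ} (h : Nat.card G = n * m) {x : G} : (∃ z, z ^ n = x) ↔ x ^ m = 1 := by
  have hn : n ≠ 0 := by rintro rfl; exact Nat.card_pos.ne' (h.trans (zero_mul m))
  have hle : (powMonoidHom n : G →* G).range ≤ (powMonoidHom m).ker := by
    rintro _ ⟨z, rfl⟩
    simp [← pow_mul, ← h, pow_card_eq_one']
  have hcard : Nat.card (powMonoidHom m : G →* G).ker ≤
      Nat.card (powMonoidHom n : G →* G).range := by
    rw [card_powMonoidHom_ker, card_powMonoidHom_range, h, Nat.gcd_mul_left_left,
      Nat.gcd_mul_right_left, Nat.mul_div_cancel_left _ (Nat.pos_of_ne_zero hn)]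
  simpa using SetLike.ext_iff.mp (Subgroup.eq_of_le_of_card_ge hle hcard) x

theorem FiniteField.exists_pow_eq_iff_pow_eq_one {F : Type*} [Field F] [Finite F] {n m : ℕ}
    (h : Nat.card F - 1 = n * m) {x : F} :
    (∃ z, z ≠ 0 ∧ x = z ^ n) ↔ x ≠ 0 ∧ x ^ m = 1 := by
  have hG : Nat.card Fˣ = n * m := by rw [Nat.card_units, h]
  constructor
  · rintro ⟨z, hz, rfl⟩
    have := (IsCyclic.exists_pow_eq_iff_pow_eq_one hG).mp ⟨Units.mk0 z hz, rfl⟩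
    exact ⟨pow_ne_zero n hz, by simpa using congrArg Units.val this⟩
  · rintro ⟨hx, hxm⟩
    obtain ⟨z, hz⟩ := (IsCyclic.exists_pow_eq_iff_pow_eq_one hG (x := Units.mk0 x hx)).mpr
      (Units.ext (by simp [hxm]))
    exact ⟨z, z.ne_zero, by rw [← Units.val_pow_eq_pow_val, hz, Units.val_mk0]⟩

theorem Subfield.mem_iff_pow_natCard_eq_self {E : Type*} [Field E] (K : Subfield E) [Finite K]
    {x : E} : x ∈ K ↔ x ^ Nat.card K = x := by
  have := Fintype.ofFinite K
  rw [Nat.card_eq_fintype_card]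
  refine ⟨fun hx => congrArg Subtype.val (FiniteField.pow_card (⟨x, hx⟩ : K)), fun hx => ?_⟩
  -- `X ^ q - X` already has its `q` roots in `K`, so it has no further roots in `E`.
  have hq := Fintype.one_lt_card (α := K)
  have hroots := FiniteField.roots_X_pow_card_sub_X K
  have hmap := roots_map_of_injective_of_card_eq_natDegree K.subtype.injective
    (p := X ^ Fintype.card K - X)
    (by rw [hroots, FiniteField.X_pow_card_sub_X_natDegree_eq K hq]; simp)
  have hx_root : x ∈ ((X ^ Fintype.card K - X : K[X]).map K.subtype).roots := by
    rw [mem_roots_map_of_injective K.subtype.injective (FiniteField.X_pow_card_sub_X_ne_zero K hq)]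
    simp [hx]
  rw [← hmap, hroots] at hx_root
  obtain ⟨y, -, rfl⟩ := Multiset.mem_map.mp hx_root
  exact y.2

theorem Subfield.exists_mul_eq_iff_pow_twentyOne_eq_one {E : Type*} [Field E] {K L : Subfield E}
    (hK : Nat.card K = 4) (hL : Nat.card L = 8) {x : E} :
    (∃ p ∈ K, ∃ r ∈ L, p ≠ 0 ∧ r ≠ 0 ∧ x = p * r) ↔ x ≠ 0 ∧ x ^ 21 = 1 := by
  have : Finite K := Nat.finite_of_card_ne_zero (by rw [hK]; norm_num)
  have : Finite L := Nat.finite_of_card_ne_zero (by rw [hL]; norm_num)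
  have hKmem (y : E) : y ∈ K ↔ y ^ 4 = y := by rw [K.mem_iff_pow_natCard_eq_self, hK]
  have hLmem (y : E) : y ∈ L ↔ y ^ 8 = y := by rw [L.mem_iff_pow_natCard_eq_self, hL]
  simp only [hKmem, hLmem]
  constructor
  · rintro ⟨p, hp, r, hr, hp0, hr0, rfl⟩
    have hp3 : p ^ 3 = 1 := mul_left_cancel₀ hp0 (by rw [← pow_succ', mul_one, hp])
    have hr7 : r ^ 7 = 1 := mul_left_cancel₀ hr0 (by rw [← pow_succ', mul_one, hr])
    refine ⟨mul_ne_zero hp0 hr0, ?_⟩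
    calc (p * r) ^ 21 = (p ^ 3) ^ 7 * (r ^ 7) ^ 3 := by ring
      _ = 1 := by rw [hp3, hr7, one_pow, one_pow, one_mul]
  · rintro ⟨hx, hx21⟩
    refine ⟨x ^ 7, ?_, x ^ 15, ?_, pow_ne_zero _ hx, pow_ne_zero _ hx, ?_⟩
    · calc (x ^ 7) ^ 4 = x ^ 21 * x ^ 7 := by ring
        _ = x ^ 7 := by rw [hx21, one_mul]
    · calc (x ^ 15) ^ 8 = (x ^ 21) ^ 5 * x ^ 15 := by ring
        _ = x ^ 15 := by rw [hx21, one_pow, one_mul]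
    · calc x = x ^ 21 * x := by rw [hx21, one_mul]
        _ = x ^ 7 * x ^ 15 := by ring

theorem FiniteField.exists_intermediateField_finrank_eq {p : ℕ} [Fact p.Prime] {E : Type*}
    [Field E] [Algebra (ZMod p) E] [Finite E] {d : ℕ} (hd : d ∣ finrank (ZMod p) E) :
    ∃ K : IntermediateField (ZMod p) E, finrank (ZMod p) K = d := by
  have hd0 : d ≠ 0 := by rintro rfl; exact finrank_pos.ne' (zero_dvd_iff.mp hd)
  obtain ⟨f⟩ := nonempty_algHom_of_finrank_dvd (K := GaloisField p d) (L := E)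
    (by rwa [GaloisField.finrank p hd0])
  exact ⟨f.fieldRange,
    f.equivFieldRange.toLinearEquiv.finrank_eq.symm.trans (GaloisField.finrank p hd0)⟩

namespace IntermediateField.LinearDisjoint

variable {R E : Type*} [Field R] [Field E] [Algebra R E] {A B : IntermediateField R E}
  [FiniteDimensional R E] {m n : Type*} [Fintype m] [Fintype n]

noncomputable def mulBasis (H : A.LinearDisjoint B) (a : Basis m R A) (b : Basis n R B)
    (h : finrank R A * finrank R B = finrank R E) : Basis (m × n) R E :=
  basisOfLinearIndependentOfCardEqFinrank' _
    (H.linearIndependent_mul a.linearIndependent b.linearIndependent)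
    (by rw [Fintype.card_prod, ← finrank_eq_card_basis a, ← finrank_eq_card_basis b, h])

theorem mulBasis_apply (H : A.LinearDisjoint B) (a : Basis m R A) (b : Basis n R B)
    (h : finrank R A * finrank R B = finrank R E) (i : m) (j : n) :
    H.mulBasis a b h (i, j) = a i * b j :=
  congrFun (coe_basisOfLinearIndependentOfCardEqFinrank' _ _ _) (i, j)

noncomputable def matrixEquiv (H : A.LinearDisjoint B) (a : Basis m R A) (b : Basis n R B)
    (h : finrank R A * finrank R B = finrank R E) : E ≃ₗ[R] Matrix m n R :=
  (H.mulBasis a b h).equivFun ≪≫ₗ LinearEquiv.curry R R m n ≪≫ₗ ofLinearEquiv R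

theorem matrixEquiv_symm_vecMulVec (H : A.LinearDisjoint B) (a : Basis m R A)
    (b : Basis n R B) (h : finrank R A * finrank R B = finrank R E) (u : m → R) (v : n → R) :
    (H.matrixEquiv a b h).symm (vecMulVec u v) = a.equivFun.symm u * b.equivFun.symm v := by
  simp only [matrixEquiv, LinearEquiv.trans_symm, LinearEquiv.trans_apply,
    Basis.equivFun_symm_apply, Fintype.sum_prod_type, Finset.sum_mul_sum, mulBasis_apply, IntermediateField.coe_sum]
  refine Fintype.sum_congr _ _ fun i => Fintype.sum_congr _ _ fun j => ?_
  rw [IntermediateField.coe_smul, IntermediateField.coe_smul, smul_mul_smul_comm]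
  rfl

theorem rank_matrixEquiv_eq_one_iff (H : A.LinearDisjoint B) (a : Basis m R A)
    (b : Basis n R B) (h : finrank R A * finrank R B = finrank R E) (x : E) :
    (H.matrixEquiv a b h x).rank = 1 ↔ ∃ p ∈ A, ∃ r ∈ B, p ≠ 0 ∧ r ≠ 0 ∧ x = p * r := by
  rw [rank_eq_one_iff_exists_vecMulVec]
  constructor
  · rintro ⟨u, v, hu, hv, hx⟩
    refine ⟨_, (a.equivFun.symm u).2, _, (b.equivFun.symm v).2, ?_, ?_, ?_⟩
    · rwa [Ne, ZeroMemClass.coe_eq_zero, LinearEquiv.map_eq_zero_iff]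
    · rwa [Ne, ZeroMemClass.coe_eq_zero, LinearEquiv.map_eq_zero_iff]
    · rw [← matrixEquiv_symm_vecMulVec H a b h, ← hx, LinearEquiv.symm_apply_apply]
  · rintro ⟨p, hp, r, hr, hp0, hr0, rfl⟩
    refine ⟨a.equivFun ⟨p, hp⟩, b.equivFun ⟨r, hr⟩, ?_, ?_, ?_⟩
    · rwa [Ne, LinearEquiv.map_eq_zero_iff, ← ZeroMemClass.coe_eq_zero]
    · rwa [Ne, LinearEquiv.map_eq_zero_iff, ← ZeroMemClass.coe_eq_zero]
    · rw [← LinearEquiv.eq_symm_apply, matrixEquiv_symm_vecMulVec]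
      simp

end IntermediateField.LinearDisjoint

theorem vlsAdj_iff {F : Type*} [Field F] {x y : F} :
    vlsAdj x y ↔ ∃ z, z ≠ 0 ∧ x - y = z ^ 3 := by
  refine ⟨And.right, fun h => ⟨fun hxy => ?_, h⟩⟩
  obtain ⟨z, hz, hxyz⟩ := h
  exact pow_ne_zero 3 hz (by rw [← hxyz, hxy, sub_self])

theorem bilinearFormsAdj_iff {K : Type*} [Field K] {A B : Matrix (Fin 2) (Fin 3) K} :
    bilinearFormsAdj A B ↔ (A - B).rank = 1 := by
  refine ⟨And.right, fun h => ⟨fun hAB => ?_, h⟩⟩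
  rw [hAB, sub_self, Matrix.rank_zero] at h
  exact zero_ne_one h

/-- The Van Lint–Schrijver graph on `GF(64)` is isomorphic to the
bilinear forms graph `H₂(2,3)` on `2 × 3` matrices over `GF(2)`. -/
theorem vls64_iso_bilinearForms
    (F : Type*) [Field F] [Fintype F] (hF : Fintype.card F = 64) :
    ∃ e : F ≃ Matrix (Fin 2) (Fin 3) (ZMod 2),
      ∀ x y : F, vlsAdj x y ↔ bilinearFormsAdj (e x) (e y) := by
  have : CharP F 2 := charP_of_card_eq_prime_pow (p := 2) (f := 6) hF
  let := ZMod.algebra F 2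
  have hF6 : finrank (ZMod 2) F = 6 := by
    have := Module.card_eq_pow_finrank (K := ZMod 2) (V := F)
    rw [ZMod.card, hF] at this
    exact (Nat.pow_right_injective le_rfl this).symm
  have hcard (K : IntermediateField (ZMod 2) F) : Nat.card K.toSubfield = 2 ^ finrank (ZMod 2) K :=
    (Module.natCard_eq_pow_finrank (K := ZMod 2) (V := K)).trans (by rw [Nat.card_zmod])
  obtain ⟨K₄, hK₄⟩ := FiniteField.exists_intermediateField_finrank_eq (E := F) (d := 2)
    (by rw [hF6]; norm_num)
  obtain ⟨K₈, hK₈⟩ := FiniteField.exists_intermediateField_finrank_eq (E := F) (d := 3)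
    (by rw [hF6]; norm_num)
  have H : K₄.LinearDisjoint K₈ := .of_finrank_coprime (by rw [hK₄, hK₈]; norm_num)
  let e := H.matrixEquiv (finBasisOfFinrankEq _ _ hK₄) (finBasisOfFinrankEq _ _ hK₈)
    (by rw [hK₄, hK₈, hF6])
  refine ⟨e.toEquiv, fun x y => ?_⟩
  rw [vlsAdj_iff, bilinearFormsAdj_iff, LinearEquiv.coe_toEquiv, ← map_sub,
    H.rank_matrixEquiv_eq_one_iff, FiniteField.exists_pow_eq_iff_pow_eq_one (n := 3) (m := 21)
      (by rw [Nat.card_eq_fintype_card, hF])]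
  exact (Subfield.exists_mul_eq_iff_pow_twentyOne_eq_one (K := K₄.toSubfield)
    (L := K₈.toSubfield) (by rw [hcard, hK₄]; norm_num) (by rw [hcard, hK₈]; norm_num)).symm
end
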